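/- Let K be a field and p a polynomial over K with natDegree d ≥ 2. For every j ≥ 1, the set {z ∈ K : (fun z => p.eval z)^[j] z = z} of fixed points of the j-th iterate of the evaluation map of p is finite with at most d^j elements; consequently, for every k ≥ 1, the union ⋃_{j | k, j < k} {z ∈ K : (fun z => p.eval z)^[j] z = z} over all proper divisors j of k is finite with cardinality at most 2·k·√(d^k). -/

import Mathlib

/-!
The fixed points of the `j`-th iterate of `z ↦ p.eval z` are the roots of `p^{∘j} - X`,
a polynomial of degree `d ^ j`, nonzero because `d ^ j ≥ d ≥ 2 > 1`; so there are at most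
`d ^ j` of them. A proper divisor `j` of `k` satisfies `2 * j ≤ k`, hence `d ^ j ≤ √(d ^ k)`,
and there are fewer than `k` proper divisors.
-/

open Polynomial

namespace Polynomial

variable {R : Type*} [CommRing R] [IsDomain R] {p : R[X]} {j : ℕ}

theorem natDegree_iterate_comp_X_sub_X (hp : 1 < p.natDegree) (hj : j ≠ 0) :
    (p.comp^[j] X - X).natDegree = p.natDegree ^ j := by
  have hlt : (X : R[X]).natDegree < (p.comp^[j] X).natDegree := by
    rw [natDegree_iterate_comp, natDegree_X, mul_one]
    exact Nat.one_lt_pow hj hp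
  rw [natDegree_sub_eq_left_of_natDegree_lt hlt, natDegree_iterate_comp, natDegree_X, mul_one]

theorem fixedPoints_iterate_eval_eq_rootSet (hp : 1 < p.natDegree) (hj : j ≠ 0) :
    Function.fixedPoints (fun z => p.eval z)^[j] = (p.comp^[j] X - X).rootSet R := by
  have hne : p.comp^[j] X - X ≠ 0 := by
    intro h
    have := natDegree_iterate_comp_X_sub_X hp hj
    rw [h, natDegree_zero] at this
    exact pow_ne_zero j (by omega) this.symm
  ext z
  rw [mem_rootSet_of_ne hne, coe_aeval_eq_eval, eval_sub, eval_X, iterate_comp_eval, eval_X,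
    sub_eq_zero]
  rfl

theorem finite_fixedPoints_iterate_eval (hp : 1 < p.natDegree) (hj : j ≠ 0) :
    (Function.fixedPoints (fun z => p.eval z)^[j]).Finite := by
  rw [fixedPoints_iterate_eval_eq_rootSet hp hj]
  exact rootSet_finite _ R

theorem ncard_fixedPoints_iterate_eval_le (hp : 1 < p.natDegree) (hj : j ≠ 0) :
    (Function.fixedPoints (fun z => p.eval z)^[j]).ncard ≤ p.natDegree ^ j := by
  rw [fixedPoints_iterate_eval_eq_rootSet hp hj, ← natDegree_iterate_comp_X_sub_X hp hj]
  exact ncard_rootSet_le _ R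

end Polynomial

theorem Nat.two_mul_le_of_mem_properDivisors {m n : ℕ} (h : m ∈ n.properDivisors) :
    2 * m ≤ n := by
  obtain ⟨⟨c, rfl⟩, hlt⟩ := Nat.mem_properDivisors.1 h
  have hc : 2 ≤ c := by
    by_contra! hc
    interval_cases c <;> omega
  nlinarith

theorem Nat.card_properDivisors_le (n : ℕ) : n.properDivisors.card ≤ n :=
  (Finset.card_filter_le _ _).trans (by simp)

theorem Real.pow_le_sqrt_pow {x : ℝ} (hx : 1 ≤ x) {j k : ℕ} (h : 2 * j ≤ k) :
    x ^ j ≤ √(x ^ k) := by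
  rw [Real.le_sqrt (by positivity) (by positivity), ← pow_mul, mul_comm]
  exact pow_le_pow_right₀ hx h

/-- Let `p` be a polynomial over a field `K` of `natDegree d ≥ 2`. For every `j ≥ 1`, the
fixed-point set of the `j`-th iterate of the evaluation map of `p` is finite with at most
`d^j` elements; consequently, for every `k ≥ 1`, the union of these fixed-point sets over
all proper divisors `j` of `k` is finite with cardinality at most `2·k·√(d^k)`. -/
theorem polynomial_iterate_fixedPoints_card {K : Type*} [Field K] (p : Polynomial K)
    (d : ℕ) (hdeg : p.natDegree = d) (hd : 2 ≤ d) :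
    (∀ j : ℕ, 1 ≤ j →
      ({z : K | (fun z => p.eval z)^[j] z = z}).Finite ∧
        ({z : K | (fun z => p.eval z)^[j] z = z}).ncard ≤ d ^ j) ∧
    (∀ k : ℕ, 1 ≤ k →
      (⋃ j ∈ k.properDivisors, {z : K | (fun z => p.eval z)^[j] z = z}).Finite ∧
        ((⋃ j ∈ k.properDivisors, {z : K | (fun z => p.eval z)^[j] z = z}).ncard : ℝ) ≤
          2 * k * Real.sqrt ((d : ℝ) ^ k)) := by
  subst hdeg
  have hp : 1 < p.natDegree := hd
  have hpos {j k : ℕ} (hj : j ∈ k.properDivisors) : j ≠ 0 :=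
    (Nat.pos_of_mem_properDivisors hj).ne'
  refine ⟨fun j hj => ⟨finite_fixedPoints_iterate_eval hp (by omega),
    ncard_fixedPoints_iterate_eval_le hp (by omega)⟩, fun k _ => ⟨?_, ?_⟩⟩
  · exact k.properDivisors.finite_toSet.biUnion fun j hj =>
      finite_fixedPoints_iterate_eval hp (hpos hj)
  have hd1 : (1 : ℝ) ≤ p.natDegree := by exact_mod_cast hp.le
  calc ((⋃ j ∈ k.properDivisors, {z : K | (fun z => p.eval z)^[j] z = z}).ncard : ℝ)
      ≤ ∑ j ∈ k.properDivisors, ((Function.fixedPoints (p.eval ·)^[j]).ncard : ℝ) := by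
        exact_mod_cast k.properDivisors.set_ncard_biUnion_le _
    _ ≤ ∑ j ∈ k.properDivisors, √((p.natDegree : ℝ) ^ k) := by
        refine Finset.sum_le_sum fun j hj => le_trans ?_ (Real.pow_le_sqrt_pow hd1
          (Nat.two_mul_le_of_mem_properDivisors hj))
        exact_mod_cast ncard_fixedPoints_iterate_eval_le hp (hpos hj)
    _ = k.properDivisors.card * √((p.natDegree : ℝ) ^ k) := by
        rw [Finset.sum_const, nsmul_eq_mul]
    _ ≤ 2 * k * √((p.natDegree : ℝ) ^ k) := by
        have hcard : (k.properDivisors.card : ℝ) ≤ k := mod_cast k.card_properDivisors_le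
        gcongr
        linarith [k.cast_nonneg (α := ℝ)]
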